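/- The polynomials I_n satisfy the second-order equation: (−∂_z∂_w + I_1·∂_w) I_n = ν·n·I_n for all n, where ∂_z and ∂_w are the formal partial derivatives in the two independent variables z and w, and I_1 = νw − 2αz − ξ. -/
import Mathlib


open MvPolynomial

noncomputable def Ipoly (ν α ξ : ℂ) : ℕ → MvPolynomial (Fin 2) ℂ
  | 0 => 1
  | 1 => C ν * X 1 - C (2 * α) * X 0 - C ξ
  | (n + 2) => (C ν * X 1 - C (2 * α) * X 0 - C ξ) * Ipoly ν α ξ (n + 1)
      + C (2 * α * (n + 1)) * Ipoly ν α ξ n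

private lemma pd1_X0 : (pderiv (1 : Fin 2)) (X (0 : Fin 2) : MvPolynomial (Fin 2) ℂ) = 0 :=
  pderiv_X_of_ne (by decide)

private lemma pd0_X1 : (pderiv (0 : Fin 2)) (X (1 : Fin 2) : MvPolynomial (Fin 2) ℂ) = 0 :=
  pderiv_X_of_ne (by decide)

private lemma Ipoly_succ_succ (ν α ξ : ℂ) (n : ℕ) :
    Ipoly ν α ξ (n + 2) = (C ν * X 1 - C (2 * α) * X 0 - C ξ) * Ipoly ν α ξ (n + 1)
      + C (2 * α * (n + 1)) * Ipoly ν α ξ n := by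
  rw [Ipoly]

private lemma aux (ν α ξ : ℂ) : ∀ n : ℕ,
    C (2 * α) * pderiv 1 (Ipoly ν α ξ (n + 1)) - C ν * pderiv 0 (Ipoly ν α ξ (n + 1)) =
      C (4 * α * ν * (n + 1)) * Ipoly ν α ξ n := by
  intro n
  induction n using Nat.twoStepInduction with
  | zero =>
      simp only [zero_add, Ipoly, map_sub, map_add, pderiv_mul, pderiv_C, pderiv_X_self,
        pd1_X0, pd0_X1, Nat.cast_zero, mul_zero, zero_mul, add_zero, zero_add, mul_one,
        sub_zero, zero_sub, map_one]
      simp only [map_mul, map_add, map_one, map_ofNat]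
      ring
  | one =>
      rw [show (1 : ℕ) + 1 = 0 + 2 from rfl, Ipoly_succ_succ]
      simp only [zero_add, Ipoly, map_sub, map_add, pderiv_mul, pderiv_C, pderiv_X_self,
        pd1_X0, pd0_X1, Nat.cast_zero, Nat.cast_one, mul_zero, zero_mul, add_zero,
        zero_add, mul_one, sub_zero, zero_sub, map_one]
      simp only [map_mul, map_add, map_one, map_ofNat]
      ring
  | more m h1 h2 =>
      rw [show m + 1 + 1 = m + 2 from rfl] at h2
      rw [show m + 2 + 1 = m + 1 + 2 from rfl]
      simp only [Ipoly_succ_succ, show m + 1 + 1 = m + 2 from rfl] at h2 ⊢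
      simp only [map_sub, map_add, pderiv_mul, pderiv_C, pderiv_X_self, pd1_X0, pd0_X1,
        mul_zero, zero_mul, add_zero, zero_add, mul_one, sub_zero, zero_sub] at h1 h2 ⊢
      simp only [map_mul, map_add, map_one, map_ofNat, Nat.cast_add, Nat.cast_one,
        Nat.cast_ofNat] at h1 h2 ⊢
      linear_combination (C ν * X 1 - 2 * C α * X 0 - C ξ) * h2
        + 2 * C α * (C (m : ℂ) + 2) * h1

theorem stmt12 (ν α ξ : ℂ) (n : ℕ) :
    -(pderiv 0 (pderiv 1 (Ipoly ν α ξ n)))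
        + (C ν * X 1 - C (2 * α) * X 0 - C ξ) * pderiv 1 (Ipoly ν α ξ n) =
      C (ν * n) * Ipoly ν α ξ n := by
  induction n using Nat.twoStepInduction with
  | zero =>
      simp [Ipoly]
  | one =>
      simp only [Ipoly, map_sub, map_add, pderiv_mul, pderiv_C, pderiv_X_self,
        pd1_X0, pd0_X1, Nat.cast_one, map_zero, mul_zero, zero_mul, add_zero, zero_add,
        mul_one, sub_zero, zero_sub, neg_zero, map_one]
      simp only [map_mul, map_add, map_one, map_ofNat]
      ring
  | more m h1 h2 =>
      have haux := aux ν α ξ m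
      simp only [Ipoly_succ_succ] at h2 ⊢
      simp only [map_sub, map_add, pderiv_mul, pderiv_C, pderiv_X_self, pd1_X0, pd0_X1,
        mul_zero, zero_mul, add_zero, zero_add, mul_one, sub_zero, zero_sub,
        neg_zero] at h1 h2 haux ⊢
      simp only [map_mul, map_add, map_one, map_ofNat, Nat.cast_add, Nat.cast_one,
        Nat.cast_ofNat] at h1 h2 haux ⊢
      linear_combination (C ν * X 1 - 2 * C α * X 0 - C ξ) * h2
        + 2 * C α * (C (m : ℂ) + 1) * h1 + haux
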